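/- arXiv:2206.12729 — 5 statements merged into one kernel-verified Lean document; each statement's English description precedes it below -/
import Mathlib

section
/- For any Boolean network f and any configurations x, y, z, the MP reachability relation is transitive, i.e., if x →_MP y and y →_MP z then x →_MP z. -/
/-- Vertex set of a sub-hypercube `h ∈ {0,1,*}^n`, encoded as `Fin n → Option Bool`
(`none` = free component `*`). -/
def verts {n : ℕ} (h : Fin n → Option Bool) : Set (Fin n → Bool) :=
  {x | ∀ i b, h i = some b → x i = b}

/-- `h` is `K`-closed by the Boolean network `f`. -/
def KClosed {n : ℕ} (f : (Fin n → Bool) → Fin n → Bool) (K : Set (Fin n))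
    (h : Fin n → Option Bool) : Prop :=
  ∀ x ∈ verts h, ∀ i ∈ K, ∀ b, h i = some b → f x i = b

/-- `h` is the smallest `K`-closed sub-hypercube containing `x`. -/
def SmallestClosed {n : ℕ} (f : (Fin n → Bool) → Fin n → Bool) (K : Set (Fin n))
    (x : Fin n → Bool) (h : Fin n → Option Bool) : Prop :=
  KClosed f K h ∧ x ∈ verts h ∧
    ∀ h', KClosed f K h' → x ∈ verts h' → verts h ⊆ verts h'

/-- Most Permissive transition `x →_MP y`. -/
def MPTrans {n : ℕ} (f : (Fin n → Bool) → Fin n → Bool) (x y : Fin n → Bool) : Prop :=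
  ∃ (K : Set (Fin n)) (h : Fin n → Option Bool), SmallestClosed f K x h ∧
    y ∈ verts h ∧ ∀ i ∈ K, ∃ z ∈ verts h, y i = f z i

/-- The smallest `K`-closed sub-hypercube containing `x` always exists. -/
lemma exists_smallest {n : ℕ} (f : (Fin n → Bool) → Fin n → Bool) (K : Set (Fin n))
    (x : Fin n → Bool) : ∃ h, SmallestClosed f K x h := by
  classical
  set h : Fin n → Option Bool := fun i =>
    if ∃ h', KClosed f K h' ∧ x ∈ verts h' ∧ (h' i).isSome then some (x i) else none with hdef
  have hx : x ∈ verts h := by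
    intro i b hib
    simp only [hdef] at hib
    split at hib
    · exact Option.some_inj.mp hib
    · exact absurd hib (by simp)
  have key : ∀ v ∈ verts h, ∀ h', KClosed f K h' → x ∈ verts h' → v ∈ verts h' := by
    intro v hv h' hc hxh' i b hib
    have hcond : ∃ h'', KClosed f K h'' ∧ x ∈ verts h'' ∧ (h'' i).isSome :=
      ⟨h', hc, hxh', by rw [hib]; rfl⟩
    have hhi : h i = some (x i) := by simp only [hdef]; rw [if_pos hcond]
    have hb : x i = b := hxh' i b hib
    rw [hv i (x i) hhi, hb]
  refine ⟨h, ?_, hx, fun h' hc hxh' v hv => key v hv h' hc hxh'⟩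
  intro v hv i hi b hib
  simp only [hdef] at hib
  split at hib
  · rename_i hcond
    obtain ⟨h', hc, hxh', hs⟩ := hcond
    obtain ⟨c, hc'⟩ := Option.isSome_iff_exists.mp hs
    have hcx : c = x i := (hxh' i c hc').symm
    have := hc v (key v hv h' hc hxh') i hi c hc'
    rw [this, hcx, Option.some_inj.mp hib]
  · exact absurd hib (by simp)

/-- In the smallest `K`-closed sub-hypercube containing `x`, every coordinate
outside `K` is fixed to its value in `x`. -/
lemma fixed_outside {n : ℕ} {f : (Fin n → Bool) → Fin n → Bool} {K : Set (Fin n)}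
    {x : Fin n → Bool} {h : Fin n → Option Bool} (hs : SmallestClosed f K x h)
    {i : Fin n} (hi : i ∉ K) : ∀ v ∈ verts h, v i = x i := by
  classical
  obtain ⟨hcl, hx, hmin⟩ := hs
  set h' : Fin n → Option Bool := fun j => if j = i then some (x i) else h j with h'def
  have hsub : verts h' ⊆ verts h := by
    intro v hv j b hjb
    by_cases hji : j = i
    · subst hji
      have := hv j (x j) (by simp [h'def])
      rw [this, ← hx j b hjb]
    · exact hv j b (by simp [h'def, hji, hjb])
  have hxh' : x ∈ verts h' := by
    intro j b hjb
    by_cases hji : j = i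
    · subst hji; simp [h'def] at hjb; rw [hjb]
    · simp [h'def, hji] at hjb; exact hx j b hjb
  have hcl' : KClosed f K h' := by
    intro v hv j hj b hjb
    have hji : j ≠ i := fun e => hi (e ▸ hj)
    simp [h'def, hji] at hjb
    exact hcl v (hsub hv) j hj b hjb
  intro v hv
  exact hmin h' hcl' hxh' hv i (x i) (by simp [h'def])

/-- MP reachability is transitive: if `x →_MP y` and `y →_MP z` then `x →_MP z`. -/
theorem stmt_3 {n : ℕ} (f : (Fin n → Bool) → Fin n → Bool) (x y z : Fin n → Bool)
    (hxy : MPTrans f x y) (hyz : MPTrans f y z) : MPTrans f x z := by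
  obtain ⟨K1, h1, hs1, hy1, hw1⟩ := hxy
  obtain ⟨K2, h2, hs2, hz2, hw2⟩ := hyz
  obtain ⟨h, hsh⟩ := exists_smallest f (K1 ∪ K2) x
  have hK1 : KClosed f K1 h := fun v hv i hi => hsh.1 v hv i (Or.inl hi)
  have hK2 : KClosed f K2 h := fun v hv i hi => hsh.1 v hv i (Or.inr hi)
  have h1sub : verts h1 ⊆ verts h := hs1.2.2 h hK1 hsh.2.1
  have hyh : y ∈ verts h := h1sub hy1
  have h2sub : verts h2 ⊆ verts h := hs2.2.2 h hK2 hyh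
  refine ⟨K1 ∪ K2, h, hsh, h2sub hz2, ?_⟩
  intro i hi
  by_cases hi2 : i ∈ K2
  · obtain ⟨w, hw, he⟩ := hw2 i hi2
    exact ⟨w, h2sub hw, he⟩
  · rcases hi with hi1 | hi2'
    · have hzy : z i = y i := fixed_outside hs2 hi2 z hz2
      obtain ⟨w, hw, he⟩ := hw1 i hi1
      exact ⟨w, h1sub hw, hzy.trans he⟩
    · exact absurd hi2' hi2
end

section
/- Every general asynchronous transition is a most-permissive transition: if x ≠ y and for each i with x_i ≠ y_i we have y_i = f_i(x), then x →_MP y. -/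
/-!
With `K` the set of components where `x` and `y` differ, each `i ∈ K` is unstable at `x`
(`f x i = y i ≠ x i`), so no `K`-closed sub-hypercube containing `x` can fix `i`. Hence the
smallest one is the sub-hypercube through `x` that is free exactly on `K`; it contains `y`,
and `x` itself witnesses that every `i ∈ K` can take the value `y i`.
-/

section Subcube

variable {n : ℕ}

def subcubeFreeOn (x : Fin n → Bool) (S : Set (Fin n)) [DecidablePred (· ∈ S)] :
    Fin n → Option Bool :=
  fun i => if i ∈ S then none else some (x i)

variable {x : Fin n → Bool} {S : Set (Fin n)} [DecidablePred (· ∈ S)]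

theorem mem_verts_subcubeFreeOn {z : Fin n → Bool} :
    z ∈ verts (subcubeFreeOn x S) ↔ ∀ i ∉ S, z i = x i := by
  constructor
  · intro hz i hi
    exact hz i (x i) (if_neg hi)
  · intro hz i b hb
    by_cases hi : i ∈ S
    · simp [subcubeFreeOn, hi] at hb
    · simp only [subcubeFreeOn, if_neg hi, Option.some.injEq] at hb
      exact hb ▸ hz i hi

theorem self_mem_verts_subcubeFreeOn : x ∈ verts (subcubeFreeOn x S) :=
  mem_verts_subcubeFreeOn.mpr fun _ _ => rfl

theorem kClosed_subcubeFreeOn (f : (Fin n → Bool) → Fin n → Bool) :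
    KClosed f S (subcubeFreeOn x S) := by
  intro _ _ i hi b hb
  simp [subcubeFreeOn, hi] at hb

theorem verts_subcubeFreeOn_subset {h : Fin n → Option Bool} (hx : x ∈ verts h)
    (hfree : ∀ i ∈ S, h i = none) : verts (subcubeFreeOn x S) ⊆ verts h := by
  intro z hz i b hb
  have hi : i ∉ S := fun hi => by simp [hfree i hi] at hb
  rw [mem_verts_subcubeFreeOn.mp hz i hi, hx i b hb]

end Subcube

theorem KClosed.eq_none_of_unstable {n : ℕ} {f : (Fin n → Bool) → Fin n → Bool}
    {K : Set (Fin n)} {h : Fin n → Option Bool} (hK : KClosed f K h) {x : Fin n → Bool}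
    (hx : x ∈ verts h) {i : Fin n} (hi : i ∈ K) (hunst : f x i ≠ x i) : h i = none := by
  cases hb : h i with
  | none => rfl
  | some b => exact absurd ((hK x hx i hi b hb).trans (hx i b hb).symm) hunst

theorem smallestClosed_subcubeFreeOn {n : ℕ} (f : (Fin n → Bool) → Fin n → Bool)
    (x : Fin n → Bool) (K : Set (Fin n)) [DecidablePred (· ∈ K)]
    (hunst : ∀ i ∈ K, f x i ≠ x i) : SmallestClosed f K x (subcubeFreeOn x K) :=
  ⟨kClosed_subcubeFreeOn f, self_mem_verts_subcubeFreeOn, fun _ hK hx =>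
    verts_subcubeFreeOn_subset hx fun i hi => hK.eq_none_of_unstable hx hi (hunst i hi)⟩

theorem stmt_6_general {n : ℕ} (f : (Fin n → Bool) → Fin n → Bool) (x y : Fin n → Bool)
    (hupd : ∀ i, x i ≠ y i → y i = f x i) : MPTrans f x y := by
  let K : Set (Fin n) := {i | x i ≠ y i}
  have hunst : ∀ i ∈ K, f x i ≠ x i := fun i hi => (hupd i hi).symm ▸ Ne.symm hi
  have hy : y ∈ verts (subcubeFreeOn x K) :=
    mem_verts_subcubeFreeOn.mpr fun i hi => (not_not.mp hi).symm
  exact ⟨K, subcubeFreeOn x K, smallestClosed_subcubeFreeOn f x K hunst, hy,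
    fun i hi => ⟨x, self_mem_verts_subcubeFreeOn, hupd i hi⟩⟩

/-- Every general asynchronous transition is an MP transition: if `x ≠ y` and
`y i = f x i` for every component `i` where `x` and `y` differ, then `x →_MP y`. -/
theorem stmt_6 {n : ℕ} (f : (Fin n → Bool) → Fin n → Bool) (x y : Fin n → Bool)
    (hne : x ≠ y) (hupd : ∀ i, x i ≠ y i → y i = f x i) : MPTrans f x y :=
  stmt_6_general f x y hupd
end

section
/- If a sub-hypercube h is closed by f (a trap space) and x ∈ c(h), then for every y with x →_MP y we have y ∈ c(h): trap spaces are invariant under MP transitions. -/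
theorem kClosed_of_forall_mem_verts {n : ℕ} {f : (Fin n → Bool) → Fin n → Bool}
    {h : Fin n → Option Bool} (hcl : ∀ x ∈ verts h, f x ∈ verts h) (K : Set (Fin n)) :
    KClosed f K h :=
  fun z hz i _ b hb => hcl z hz i b hb

theorem MPTrans.mem_verts_of_kClosed {n : ℕ} {f : (Fin n → Bool) → Fin n → Bool}
    {x y : Fin n → Bool} {h : Fin n → Option Bool} (hxy : MPTrans f x y)
    (hcl : ∀ K, KClosed f K h) (hx : x ∈ verts h) : y ∈ verts h := by
  obtain ⟨K, _, ⟨_, _, hmin⟩, hy, _⟩ := hxy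
  exact hmin h (hcl K) hx hy

/-- Trap spaces (sub-hypercubes closed by `f`) are invariant under MP transitions. -/
theorem stmt_13 {n : ℕ} (f : (Fin n → Bool) → Fin n → Bool) (h : Fin n → Option Bool)
    (hcl : ∀ x ∈ verts h, f x ∈ verts h) (x y : Fin n → Bool)
    (hx : x ∈ verts h) (hxy : MPTrans f x y) : y ∈ verts h :=
  hxy.mem_verts_of_kClosed (kClosed_of_forall_mem_verts hcl) hx
end

section
/- Let H be the set of free components of h(x,K) and suppose every i ∈ H lies in K. For configurations y, there is an MP transition x →_MP y witnessed by K if and only if L ⊆ Δ(x,y) ⊆ H, where L = {i ∈ H | ∀y ∈ c(h(x,K)), f_i(y) ≠ x_i}. -/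
/-!
Fixing a free coordinate `i` of `h(x,K)` to `x i` keeps `x` in the sub-hypercube, and keeps
the sub-hypercube `K`-closed unless `i ∈ K` and some vertex `z` has `f z i ≠ x i`; minimality of
`h(x,K)` therefore forces both. Hence `y ∈ c(h(x,K))` is exactly `Δ(x,y) ⊆ H`, and on such a `y`
the coordinates `i ∈ K` fixed by `h` are witnessed by `x`, those with `y i = x i` by a vertex with
`f z i = x i` (which exists iff `i ∉ L`), and those with `y i ≠ x i` by a vertex flipping `i`.
-/

section Subcube

variable {n : ℕ}

theorem mem_verts_iff_of_mem {h : Fin n → Option Bool} {x y : Fin n → Bool} (hx : x ∈ verts h) :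
    y ∈ verts h ↔ ∀ i, x i ≠ y i → h i = none := by
  constructor
  · intro hy i hxy
    cases hi : h i with
    | none => rfl
    | some b => exact absurd ((hx i b hi).trans (hy i b hi).symm) hxy
  · intro hΔ i b hi
    by_contra hyb
    have hxy : x i ≠ y i := by rwa [hx i b hi, ne_comm]
    simp [hΔ i hxy] at hi

theorem verts_update_some_subset {h : Fin n → Option Bool} {i : Fin n} (hi : h i = none)
    (b : Bool) : verts (Function.update h i (some b)) ⊆ verts h := by
  intro z hz j c hj
  rcases eq_or_ne j i with rfl | hji
  · simp [hi] at hj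
  · exact hz j c (by rwa [Function.update_of_ne hji])

theorem mem_verts_update_some_self {h : Fin n → Option Bool} {x : Fin n → Bool} (hx : x ∈ verts h)
    (i : Fin n) : x ∈ verts (Function.update h i (some (x i))) := by
  intro j b hj
  rcases eq_or_ne j i with rfl | hji
  · simpa using hj
  · exact hx j b (by rwa [Function.update_of_ne hji] at hj)

theorem mem_verts_update_not {h : Fin n → Option Bool} {x : Fin n → Bool} (hx : x ∈ verts h)
    {i : Fin n} (hi : h i = none) : Function.update x i (!x i) ∈ verts h := by
  refine (mem_verts_iff_of_mem hx).2 fun j hj => ?_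
  rcases eq_or_ne j i with rfl | hji
  · exact hi
  · simp [Function.update_of_ne hji] at hj

theorem KClosed.update_some {f : (Fin n → Bool) → Fin n → Bool} {K : Set (Fin n)}
    {h : Fin n → Option Bool} (hcl : KClosed f K h) {i : Fin n} (hi : h i = none) {b : Bool}
    (hb : i ∈ K → ∀ z ∈ verts h, f z i = b) : KClosed f K (Function.update h i (some b)) := by
  intro z hz j hjK c hj
  have hz' := verts_update_some_subset hi b hz
  rcases eq_or_ne j i with rfl | hji
  · obtain rfl : b = c := by simpa using hj
    exact hb hjK z hz'
  · exact hcl z hz' j hjK c (by rwa [Function.update_of_ne hji] at hj)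

end Subcube

section Smallest

variable {n : ℕ} {f : (Fin n → Bool) → Fin n → Bool} {K : Set (Fin n)} {x : Fin n → Bool}
  {h : Fin n → Option Bool}

theorem SmallestClosed.mem_and_exists_apply_ne (hs : SmallestClosed f K x h) {i : Fin n}
    (hi : h i = none) : i ∈ K ∧ ∃ z ∈ verts h, f z i ≠ x i := by
  obtain ⟨hcl, hx, hmin⟩ := hs
  by_contra! hfix
  have hsub := hmin _ (hcl.update_some hi hfix) (mem_verts_update_some_self hx i)
  simpa using hsub (mem_verts_update_not hx hi) i (x i) (by simp)

theorem SmallestClosed.witnessed_iff (hs : SmallestClosed f K x h) {y : Fin n → Bool}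
    (hy : y ∈ verts h) : (∀ i ∈ K, ∃ z ∈ verts h, y i = f z i) ↔
      ∀ i, h i = none → (∀ z ∈ verts h, f z i ≠ x i) → x i ≠ y i := by
  have ⟨hcl, hx, _⟩ := hs
  constructor
  · intro hK i hi hL
    obtain ⟨z, hz, hyz⟩ := hK i (hs.mem_and_exists_apply_ne hi).1
    exact hyz ▸ (hL z hz).symm
  · intro hL i hiK
    cases hb : h i with
    | some b => exact ⟨x, hx, by rw [hy i b hb, hcl x hx i hiK b hb]⟩
    | none =>
      by_cases hxy : x i = y i
      · obtain ⟨z, hz, hzx⟩ : ∃ z ∈ verts h, f z i = x i := by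
          by_contra! hf
          exact hL i hb hf hxy
        exact ⟨z, hz, hxy ▸ hzx.symm⟩
      · obtain ⟨-, z, hz, hzx⟩ := hs.mem_and_exists_apply_ne hb
        exact ⟨z, hz, (Bool.eq_not_of_ne (Ne.symm hxy)).trans (Bool.eq_not_of_ne hzx).symm⟩

end Smallest

theorem stmt_15_general {n : ℕ} (f : (Fin n → Bool) → Fin n → Bool) (K : Set (Fin n))
    (x : Fin n → Bool) (h : Fin n → Option Bool) (hs : SmallestClosed f K x h)
    (y : Fin n → Bool) :
    (y ∈ verts h ∧ ∀ i ∈ K, ∃ z ∈ verts h, y i = f z i) ↔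
    (({i | h i = none ∧ ∀ z ∈ verts h, f z i ≠ x i} ⊆ {i | x i ≠ y i}) ∧
     ({i | x i ≠ y i} ⊆ {i | h i = none})) := by
  have hΔ : y ∈ verts h ↔ {i | x i ≠ y i} ⊆ {i | h i = none} := mem_verts_iff_of_mem hs.2.1
  constructor
  · rintro ⟨hy, hK⟩
    exact ⟨fun i hi => (hs.witnessed_iff hy).1 hK i hi.1 hi.2, hΔ.1 hy⟩
  · rintro ⟨hL, hH⟩
    have hy := hΔ.2 hH
    exact ⟨hy, (hs.witnessed_iff hy).2 fun i hi hf => hL ⟨hi, hf⟩⟩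

/-- With `H` the free components of `h(x,K)` (all assumed to lie in `K`) and
`L = {i ∈ H | ∀ y ∈ c(h(x,K)), f_i(y) ≠ x_i}`, the transition `x →_MP y` is
witnessed by `K` iff `L ⊆ Δ(x,y) ⊆ H`. -/
theorem stmt_15 {n : ℕ} (f : (Fin n → Bool) → Fin n → Bool) (K : Set (Fin n))
    (x : Fin n → Bool) (h : Fin n → Option Bool) (hs : SmallestClosed f K x h)
    (hfree : ∀ i, h i = none → i ∈ K) (y : Fin n → Bool) :
    (y ∈ verts h ∧ ∀ i ∈ K, ∃ z ∈ verts h, y i = f z i) ↔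
    (({i | h i = none ∧ ∀ z ∈ verts h, f z i ≠ x i} ⊆ {i | x i ≠ y i}) ∧
     ({i | x i ≠ y i} ⊆ {i | h i = none})) :=
  stmt_15_general f K x h hs y
end

section
/- If x belongs to a smallest closed sub-hypercube (minimal trap space) m of f, then every configuration y with x →_MP y also lies in c(m), and moreover x →_MP y for every y ∈ c(m); hence c(m) is an attractor of the MP dynamics. -/
/-- `A` is an attractor of the transition relation `r`. -/
def IsAttractor {n : ℕ} (r : (Fin n → Bool) → (Fin n → Bool) → Prop)
    (A : Set (Fin n → Bool)) : Prop :=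
  A.Nonempty ∧ (∀ x ∈ A, ∀ y ∈ A, Relation.ReflTransGen r x y) ∧
    (∀ x ∈ A, ∀ z, r x z → z ∈ A)

open Classical in
/-- The smallest `K`-closed sub-hypercube containing `x` (intersection of all of them). -/
noncomputable def smallestH {n : ℕ} (f : (Fin n → Bool) → Fin n → Bool)
    (K : Set (Fin n)) (x : Fin n → Bool) : Fin n → Option Bool :=
  fun i => if ∃ h', KClosed f K h' ∧ x ∈ verts h' ∧ h' i ≠ none then some (x i) else none

lemma smallestH_sub {n : ℕ} (f : (Fin n → Bool) → Fin n → Bool) (K : Set (Fin n))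
    (x : Fin n → Bool) (h' : Fin n → Option Bool)
    (hc : KClosed f K h') (hx : x ∈ verts h') : verts (smallestH f K x) ⊆ verts h' := by
  intro y hy i b hb
  have hxi : x i = b := hx i b hb
  have hs : smallestH f K x i = some (x i) := by
    unfold smallestH
    rw [if_pos ⟨h', hc, hx, by rw [hb]; simp⟩]
  rw [hxi] at hs
  exact hy i b hs

lemma smallestH_spec {n : ℕ} (f : (Fin n → Bool) → Fin n → Bool) (K : Set (Fin n))
    (x : Fin n → Bool) : SmallestClosed f K x (smallestH f K x) := by
  have hxmem : x ∈ verts (smallestH f K x) := by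
    intro i b hb
    unfold smallestH at hb
    split_ifs at hb
    exact Option.some.inj hb
  refine ⟨?_, hxmem, fun h' hc hx => smallestH_sub f K x h' hc hx⟩
  intro z hz i hi b hb
  unfold smallestH at hb
  split_ifs at hb with hex
  obtain ⟨h', hc', hx', hne⟩ := hex
  obtain ⟨c, hc''⟩ := Option.ne_none_iff_exists'.mp hne
  have hxi : x i = c := hx' i c hc''
  have hz' : z ∈ verts h' := smallestH_sub f K x h' hc' hx' hz
  have := hc' z hz' i hi c hc''
  rw [this, ← hxi]
  exact Option.some.inj hb

/-- If `x` belongs to a minimal trap space `m` of `f`, then every MP successor of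
`x` lies in `c(m)`, every element of `c(m)` is an MP successor of `x`, and `c(m)`
is an attractor of the MP dynamics. -/
theorem stmt_18 {n : ℕ} (f : (Fin n → Bool) → Fin n → Bool) (m : Fin n → Option Bool)
    (hcl : ∀ z ∈ verts m, f z ∈ verts m)
    (hmin : ∀ m' : Fin n → Option Bool, (∀ z ∈ verts m', f z ∈ verts m') →
      verts m' ⊆ verts m → verts m' = verts m)
    (x : Fin n → Bool) (hx : x ∈ verts m) :
    (∀ y, MPTrans f x y → y ∈ verts m) ∧
    (∀ y ∈ verts m, MPTrans f x y) ∧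
    IsAttractor (MPTrans f) (verts m) := by
  -- `m` is `K`-closed for every `K`.
  have hmK : ∀ K : Set (Fin n), KClosed f K m := by
    intro K z hz i _ b hb
    exact hcl z hz i b hb
  -- forward closure, for arbitrary start point in `m`
  have hfwd : ∀ x' ∈ verts m, ∀ z, MPTrans f x' z → z ∈ verts m := by
    rintro x' hx' z ⟨K, h, hsm, hzh, -⟩
    exact hsm.2.2 m (hmK K) hx' hzh
  -- backward: every point of `m` is an MP successor of any point of `m`
  have hback : ∀ x' ∈ verts m, ∀ y ∈ verts m, MPTrans f x' y := by
    intro x' hx' y hy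
    set h0 := smallestH f Set.univ x' with hh0
    have hspec := smallestH_spec f Set.univ x'
    have hsub : verts h0 ⊆ verts m := hspec.2.2 m (hmK _) hx'
    have htrap : ∀ z ∈ verts h0, f z ∈ verts h0 := by
      intro z hz i b hb
      exact hspec.1 z hz i (Set.mem_univ i) b hb
    have heq : ∀ z, z ∈ verts h0 ↔ z ∈ verts m := fun z => by
      rw [hmin h0 htrap hsub]
    refine ⟨Set.univ, h0, hspec, (heq y).mpr hy, ?_⟩
    intro i _
    by_contra hcon
    push_neg at hcon
    have hconst : ∀ z ∈ verts h0, f z i = !(y i) := by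
      intro z hz
      have := hcon z hz
      cases hfz : f z i <;> cases hyi : y i <;> simp_all
    -- if `m i = some b`, then `z = x'` is a witness, contradiction
    cases hmi : m i with
    | some b =>
        have h1 : y i = b := hy i b hmi
        have h2 : f x' i = b := hcl x' hx' i b hmi
        exact hcon x' ((heq x').mpr hx') (by rw [h1, h2])
    | none =>
        -- strictly smaller trap space
        set m' : Fin n → Option Bool := Function.update m i (some (!(y i))) with hm'
        have hmsub : verts m' ⊆ verts m := by
          intro z hz j b hb
          refine hz j b ?_
          have hji : j ≠ i := by rintro rfl; rw [hmi] at hb; cases hb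
          rw [hm', Function.update_of_ne hji, hb]
        have hmtrap : ∀ z ∈ verts m', f z ∈ verts m' := by
          intro z hz j b hb
          by_cases hji : j = i
          · subst hji
            rw [hm', Function.update_self] at hb
            rw [hconst z ((heq z).mpr (hmsub hz)), Option.some.inj hb]
          · rw [hm', Function.update_of_ne hji] at hb
            exact hcl z (hmsub hz) j b hb
        have heq' : ∀ z, z ∈ verts m' ↔ z ∈ verts m := fun z => by
          rw [hmin m' hmtrap hmsub]
        -- but the point `Function.update x' i (y i)` is in `m` and not in `m'`
        set w : Fin n → Bool := Function.update x' i (y i) with hw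
        have hwm : w ∈ verts m := by
          intro j b hb
          have hji : j ≠ i := by rintro rfl; rw [hmi] at hb; cases hb
          rw [hw, Function.update_of_ne hji]
          exact hx' j b hb
        have hwm' : w ∈ verts m' := (heq' w).mpr hwm
        have := hwm' i (!(y i)) (by rw [hm', Function.update_self])
        rw [hw, Function.update_self] at this
        exact (Bool.not_ne_self (y i)).symm (this ▸ rfl)
  refine ⟨fun y hy => hfwd x hx y hy, fun y hy => hback x hx y hy, ⟨x, hx⟩, ?_, hfwd⟩
  intro a ha b hb
  exact Relation.ReflTransGen.single (hback a ha b hb)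
end
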